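/- arXiv:1808.03613 — 3 statements merged into one kernel-verified Lean document; each statement's English description precedes it below -/
import Mathlib

section
/- Let q be a prime power, F_q a finite field with q elements, and let a, b, K ≥ 0 be integers with a + b ≥ K. Let A be an a×K and B a b×K random matrix over F_q, all entries independent and uniform on F_q, and let X be the (a+b)×K matrix obtained by stacking A on top of B. Then Pr[rank(X) = K] = ∑_{i=max(0,K-b)}^{min(a,K)} P_i(a, K) · P(b, K-i). -/
open Finset

/-- `P(m,K) = ∏_{i=0}^{K-1} (1 - q^{i-m})`: probability that a uniformly random
`m × K` matrix over a field with `q` elements has rank `K`. -/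
noncomputable def Pfr (q m K : ℕ) : ℝ :=
  ∏ i ∈ Finset.range K, (1 - (q : ℝ) ^ ((i : ℤ) - (m : ℤ)))

/-- The Gaussian binomial coefficient `[K; r]_q`. -/
noncomputable def gaussBinom (q K r : ℕ) : ℝ :=
  ∏ i ∈ Finset.range r, (((q : ℝ) ^ (K - i) - 1) / ((q : ℝ) ^ (r - i) - 1))

/-- `P_r(m,K) = q^{-m(K-r)} · [K; r]_q · ∏_{i=0}^{r-1} (1 - q^{i-m})`. -/
noncomputable def Prk (q m K r : ℕ) : ℝ :=
  (q : ℝ) ^ (-(m : ℤ) * ((K : ℤ) - (r : ℤ))) * gaussBinom q K r *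
    ∏ i ∈ Finset.range r, (1 - (q : ℝ) ^ ((i : ℤ) - (m : ℤ)))

/-!
The stacked matrix `[A; B]` has rank `K` iff `ker A ⊓ ker B = ⊥`. Conditioning on `U = ker A` of
dimension `d`, the matrices `A` with kernel `U` are the injective maps `F^K ⧸ U → F^a`, the `B`
with `U ⊓ ker B = ⊥` are the maps injective on `U` and arbitrary on a complement, and there are
`[K; d]_q = [K; K-d]_q` such subspaces `U`. Each count is a product of factors `q^m - q^i`;
divided by `q^((a+b)K)` the term for `d` becomes `P_{K-d}(a,K) · P(b,d)`, and reindexing by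
`i = K - d = rank A` and dropping the terms that vanish gives the sum over
`max(0,K-b) ≤ i ≤ min(a,K)`.
-/

section Arithmetic

variable {q : ℕ}

theorem Pfr_eq_zero_of_lt {m K : ℕ} (h : m < K) : Pfr q m K = 0 :=
  prod_eq_zero (mem_range.mpr h) (by simp)

theorem Prk_eq_mul_Pfr (m K r : ℕ) :
    Prk q m K r =
      (q : ℝ) ^ (-(m : ℤ) * ((K : ℤ) - (r : ℤ))) * gaussBinom q K r * Pfr q m r :=
  rfl

theorem Prk_eq_zero_of_lt {m K r : ℕ} (h : m < r) : Prk q m K r = 0 := by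
  rw [Prk_eq_mul_Pfr, Pfr_eq_zero_of_lt h, mul_zero]

theorem natCast_prod_pow_sub_pow (hq : 1 ≤ q) (m t : ℕ) :
    ((∏ i ∈ range t, (q ^ m - q ^ i) : ℕ) : ℝ) =
      ∏ i ∈ range t, ((q : ℝ) ^ m - (q : ℝ) ^ i) := by
  rcases le_or_gt t m with h | h
  · push_cast [Nat.cast_prod]
    refine prod_congr rfl fun i hi => ?_
    rw [Nat.cast_sub (Nat.pow_le_pow_right hq (by simp at hi; omega))]
    push_cast; rfl
  · rw [prod_eq_zero (mem_range.mpr h) (Nat.sub_self (q ^ m)),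
      prod_eq_zero (mem_range.mpr h) (sub_self ((q : ℝ) ^ m)), Nat.cast_zero]

theorem prod_pow_sub_pow_eq_mul_Pfr (hq : q ≠ 0) (m t : ℕ) :
    ∏ i ∈ range t, ((q : ℝ) ^ m - (q : ℝ) ^ i) = (q : ℝ) ^ (m * t) * Pfr q m t := by
  have hconst : ((q : ℝ) ^ m) ^ t = ∏ _i ∈ range t, (q : ℝ) ^ m := by
    rw [prod_const, card_range]
  rw [Pfr, pow_mul, hconst, ← prod_mul_distrib]
  refine prod_congr rfl fun i _ => ?_
  have hq' : (q : ℝ) ≠ 0 := Nat.cast_ne_zero.mpr hq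
  rw [mul_sub, mul_one, ← zpow_natCast, ← zpow_natCast, ← zpow_add₀ hq', add_sub_cancel]

theorem prod_pow_sub_pow_eq_mul_prod {R : Type*} [CommRing R] (x : R) {m r : ℕ} (hr : r ≤ m) :
    ∏ i ∈ range r, (x ^ m - x ^ i) =
      (∏ i ∈ range r, x ^ i) * ∏ i ∈ range r, (x ^ (m - i) - 1) := by
  rw [← prod_mul_distrib]
  refine prod_congr rfl fun i hi => ?_
  rw [mul_sub, mul_one, ← pow_add, Nat.add_sub_cancel' (by simp at hi; omega)]

theorem prod_range_pow_sub_one_mul {R : Type*} [CommRing R] (x : R) {r K : ℕ} (hr : r ≤ K) :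
    (∏ i ∈ range r, (x ^ (K - i) - 1)) * ∏ i ∈ range (K - r), (x ^ (K - r - i) - 1) =
      ∏ i ∈ range K, (x ^ (K - i) - 1) := by
  have hsplit := prod_range_add (fun i => x ^ (K - i) - 1) r (K - r)
  rw [Nat.add_sub_cancel' hr] at hsplit
  rw [hsplit]
  exact congrArg _ (prod_congr rfl fun i _ => by rw [Nat.sub_sub])

theorem natCast_pow_sub_one_ne_zero (hq : 2 ≤ q) {n : ℕ} (hn : n ≠ 0) :
    (q : ℝ) ^ n - 1 ≠ 0 :=
  sub_ne_zero.mpr (one_lt_pow₀ (by exact_mod_cast hq) hn).ne'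

theorem gaussBinom_mul_prod_pow_sub_one (hq : 2 ≤ q) (K r : ℕ) :
    gaussBinom q K r * ∏ i ∈ range r, ((q : ℝ) ^ (r - i) - 1) =
      ∏ i ∈ range r, ((q : ℝ) ^ (K - i) - 1) := by
  rw [gaussBinom, ← prod_mul_distrib]
  exact prod_congr rfl fun i hi =>
    div_mul_cancel₀ _ (natCast_pow_sub_one_ne_zero hq (by simp at hi; omega))

theorem gaussBinom_symm (hq : 2 ≤ q) {K r : ℕ} (hr : r ≤ K) :
    gaussBinom q K (K - r) = gaussBinom q K r := by
  have hP : ∀ n, ∏ i ∈ range n, ((q : ℝ) ^ (n - i) - 1) ≠ 0 := fun n =>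
    prod_ne_zero_iff.mpr fun i hi => natCast_pow_sub_one_ne_zero hq (by simp at hi; omega)
  have key := (prod_range_pow_sub_one_mul (q : ℝ) (Nat.sub_le K r)).trans
    (prod_range_pow_sub_one_mul (q : ℝ) hr).symm
  rw [Nat.sub_sub_self hr, ← gaussBinom_mul_prod_pow_sub_one hq K (K - r),
    ← gaussBinom_mul_prod_pow_sub_one hq K r] at key
  exact mul_right_cancel₀ (mul_ne_zero (hP (K - r)) (hP r)) (by linear_combination key)

theorem gaussBinom_mul_prod_pow_sub_pow (hq : 2 ≤ q) {K r : ℕ} (hr : r ≤ K) :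
    gaussBinom q K r * ∏ i ∈ range r, ((q : ℝ) ^ r - (q : ℝ) ^ i) =
      ∏ i ∈ range r, ((q : ℝ) ^ K - (q : ℝ) ^ i) := by
  rw [prod_pow_sub_pow_eq_mul_prod _ le_rfl, prod_pow_sub_pow_eq_mul_prod _ hr, mul_left_comm,
    gaussBinom_mul_prod_pow_sub_one hq]

theorem Prk_eq_div (hq : q ≠ 0) (m K r : ℕ) :
    Prk q m K r = gaussBinom q K r * ((q : ℝ) ^ (m * r) * Pfr q m r) / (q : ℝ) ^ (m * K) := by
  have hq' : (q : ℝ) ≠ 0 := Nat.cast_ne_zero.mpr hq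
  have hpow : (q : ℝ) ^ (-(m : ℤ) * ((K : ℤ) - (r : ℤ))) =
      (q : ℝ) ^ (m * r) / (q : ℝ) ^ (m * K) := by
    rw [← zpow_natCast, ← zpow_natCast, ← zpow_sub₀ hq']
    push_cast; ring_nf
  rw [Prk_eq_mul_Pfr, hpow]
  ring

theorem sum_range_Prk_mul_Pfr (a b K : ℕ) :
    ∑ d ∈ range (K + 1), Prk q a K (K - d) * Pfr q b d =
      ∑ i ∈ Icc (K - b) (min a K), Prk q a K i * Pfr q b (K - i) := by
  calc ∑ d ∈ range (K + 1), Prk q a K (K - d) * Pfr q b d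
      = ∑ d ∈ range (K + 1), Prk q a K (K + 1 - 1 - d) * Pfr q b (K - (K + 1 - 1 - d)) :=
        sum_congr rfl fun d hd => by simp at hd; congr 2; omega
    _ = ∑ i ∈ range (K + 1), Prk q a K i * Pfr q b (K - i) :=
        sum_range_reflect (fun i => Prk q a K i * Pfr q b (K - i)) (K + 1)
    _ = ∑ i ∈ Icc (K - b) (min a K), Prk q a K i * Pfr q b (K - i) := by
        refine (sum_subset (fun i hi => by simp at hi ⊢; omega) fun i hi hi' => ?_).symm
        simp only [mem_range, mem_Icc, not_and_or, not_le] at hi hi'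
        rcases hi' with h | h
        · rw [Pfr_eq_zero_of_lt (by omega), mul_zero]
        · rw [Prk_eq_zero_of_lt (by omega), zero_mul]

end Arithmetic

open Module LinearMap Function

theorem Nat.card_subtype_prod_eq_sum {α β γ : Type*} [Finite α] [Finite β] [Fintype γ]
    (φ : α → γ) (R : γ → β → Prop) :
    Nat.card {x : α × β // R (φ x.1) x.2} =
      ∑ c, Nat.card {a // φ a = c} * Nat.card {b // R c b} := by
  let e : {x : α × β // R (φ x.1) x.2} ≃ Σ c, {a // φ a = c} × {b // R c b} :=
    { toFun := fun x => ⟨φ x.1.1, ⟨x.1.1, rfl⟩, ⟨x.1.2, x.2⟩⟩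
      invFun := fun ⟨_, ⟨a, ha⟩, ⟨b, hb⟩⟩ => ⟨(a, b), by simpa [ha] using hb⟩
      left_inv := fun _ => rfl
      right_inv := fun ⟨_, ⟨_, rfl⟩, _⟩ => rfl }
  simp only [Nat.card_congr e, Nat.card_sigma, Nat.card_prod]

theorem Fintype.sum_comp_eq_sum_range {α M : Type*} [Fintype α] [AddCommMonoid M]
    (φ : α → ℕ) {N : ℕ} (hφ : ∀ a, φ a < N) (g : ℕ → M) :
    ∑ a, g (φ a) = ∑ d ∈ range N, Nat.card {a // φ a = d} • g d := by
  classical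
  rw [← sum_fiberwise_of_maps_to (t := range N) fun a _ => mem_range.mpr (hφ a)]
  refine Finset.sum_congr rfl fun d _ => ?_
  rw [Finset.sum_congr rfl fun a ha => congrArg g (mem_filter.mp ha).2, sum_const,
    Nat.card_eq_fintype_card, Fintype.card_subtype]

section Counting

variable {F V W : Type*} [Field F] [Fintype F]
  [AddCommGroup V] [Module F V] [FiniteDimensional F V]
  [AddCommGroup W] [Module F W] [FiniteDimensional F W]

local notation "q" => Fintype.card F

theorem card_injective_linearMap :
    Nat.card {f : V →ₗ[F] W // Injective f} =
      ∏ i ∈ range (finrank F V), (q ^ finrank F W - q ^ i) := by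
  have := Module.finite_of_finite F (M := W)
  by_cases h : finrank F V ≤ finrank F W
  · let b := Module.finBasis F V
    let e : {s : Fin (finrank F V) → W // LinearIndependent F s} ≃
        {f : V →ₗ[F] W // Injective f} :=
      (b.constr F).toEquiv.subtypeEquiv fun s =>
        ⟨b.injective_constr_of_linearIndependent (R₂ := F), fun hf => by
          simpa [comp_def, b.constr_basis] using
            b.linearIndependent.map' _ (ker_eq_bot.mpr hf)⟩
    rw [← Nat.card_congr e, card_linearIndependent h,
      Fin.prod_univ_eq_prod_range (fun i => q ^ finrank F W - q ^ i)]
  · have : IsEmpty {f : V →ₗ[F] W // Injective f} :=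
      ⟨fun f => h (finrank_le_finrank_of_injective f.2)⟩
    rw [Nat.card_of_isEmpty, eq_comm]
    exact prod_eq_zero (mem_range.mpr (not_le.mp h)) (Nat.sub_self _)

theorem card_linearMap_ker_eq (U : Submodule F V) :
    Nat.card {f : V →ₗ[F] W // ker f = U} =
      ∏ i ∈ range (finrank F V - finrank F U), (q ^ finrank F W - q ^ i) := by
  let e : {f : V →ₗ[F] W // ker f = U} ≃ {g : (V ⧸ U) →ₗ[F] W // Injective g} :=
    { toFun := fun f => ⟨U.liftQ f.1 f.2.ge,
        ker_eq_bot.mp (U.ker_liftQ_eq_bot _ _ f.2.le)⟩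
      invFun := fun g => ⟨g.1 ∘ₗ U.mkQ, by
        rw [ker_comp, ker_eq_bot.mpr g.2, Submodule.comap_bot, Submodule.ker_mkQ]⟩
      left_inv := fun f => Subtype.ext (U.liftQ_mkQ _ _)
      right_inv := fun g => Subtype.ext (U.linearMap_qext (U.liftQ_mkQ _ _)) }
  rw [Nat.card_congr e, card_injective_linearMap, Submodule.finrank_quotient]

theorem card_linearMap_disjoint_ker (U : Submodule F V) :
    Nat.card {f : V →ₗ[F] W // Disjoint U (ker f)} =
      q ^ ((finrank F V - finrank F U) * finrank F W) *
        ∏ i ∈ range (finrank F U), (q ^ finrank F W - q ^ i) := by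
  obtain ⟨C, hC⟩ := U.exists_isCompl
  let e : (V →ₗ[F] W) ≃ₗ[F] (U →ₗ[F] W) × (C →ₗ[F] W) :=
    ((Submodule.prodEquivOfIsCompl U C hC).symm.arrowCongr (LinearEquiv.refl F W)).trans
      (coprodEquiv F).symm
  have he : ∀ f, (e f).1 = f ∘ₗ U.subtype := fun f => by ext; simp [e]
  have hdisj : ∀ f : V →ₗ[F] W, Disjoint U (ker f) ↔ Injective (e f).1 := fun f => by
    rw [he, ← ker_eq_bot, ker_comp, Submodule.disjoint_iff_comap_eq_bot]
  have hCdim : finrank F C = finrank F V - finrank F U := by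
    have := Submodule.finrank_add_eq_of_isCompl hC; omega
  have := Module.finite_of_finite F (M := W)
  let e' : {f : V →ₗ[F] W // Disjoint U (ker f)} ≃
      {g : (U →ₗ[F] W) × (C →ₗ[F] W) // Injective g.1} :=
    e.toEquiv.subtypeEquiv hdisj
  rw [Nat.card_congr (e'.trans (Equiv.prodSubtypeFstEquivSubtypeProd
      (p := fun g : U →ₗ[F] W => Injective g))),
    Nat.card_prod, card_injective_linearMap, Module.natCard_eq_pow_finrank (K := F),
    finrank_linearMap, hCdim, Nat.card_eq_fintype_card, mul_comm]

theorem card_submodule_finrank_eq_mul (d : ℕ) :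
    Nat.card {U : Submodule F V // finrank F U = d} * ∏ i ∈ range d, (q ^ d - q ^ i) =
      ∏ i ∈ range d, (q ^ finrank F V - q ^ i) := by
  have := Module.finite_of_finite F (M := V)
  have : Finite ((Fin d → F) →ₗ[F] V) := Module.finite_of_finite F
  let _ := Fintype.ofFinite {U : Submodule F V // finrank F U = d}
  let toRange : {f : (Fin d → F) →ₗ[F] V // Injective f} →
      {U : Submodule F V // finrank F U = d} :=
    fun f => ⟨range f.1, by simp [finrank_range_of_inj f.2]⟩
  have hfiber : ∀ U, Nat.card {f // toRange f = U} = ∏ i ∈ range d, (q ^ d - q ^ i) := by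
    intro U
    let incl : {g : (Fin d → F) →ₗ[F] U // Injective g} → {f // toRange f = U} := fun g =>
      ⟨⟨U.1.subtype ∘ₗ g.1, U.1.injective_subtype.comp g.2⟩, Subtype.ext <| by
        have hg := (injective_iff_surjective_of_finrank_eq_finrank (by simp [U.2])).mp g.2
        simp only [toRange, range_comp, range_eq_top.mpr hg, Submodule.map_top,
          Submodule.range_subtype]⟩
    have hincl : Bijective incl := by
      refine ⟨fun g g' h => Subtype.ext (ext fun x => Subtype.ext ?_),
        fun ⟨⟨f, hf⟩, hU⟩ => ?_⟩
      · exact LinearMap.congr_fun (congrArg (fun f => f.1.1) h) x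
      · have hfU : ∀ x, f x ∈ U.1 := fun x => (congrArg Subtype.val hU) ▸ mem_range_self f x
        exact ⟨⟨f.codRestrict U.1 hfU, fun x y h => hf (congrArg Subtype.val h)⟩, rfl⟩
    rw [← Nat.card_congr (Equiv.ofBijective incl hincl), card_injective_linearMap, U.2]
    simp
  calc Nat.card {U : Submodule F V // finrank F U = d} * ∏ i ∈ range d, (q ^ d - q ^ i)
      = ∑ U, Nat.card {f // toRange f = U} := by simp [hfiber, Nat.card_eq_fintype_card]
    _ = Nat.card {f : (Fin d → F) →ₗ[F] V // Injective f} :=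
      Nat.card_sigma.symm.trans (Nat.card_congr (Equiv.sigmaFiberEquiv toRange))
    _ = ∏ i ∈ range d, (q ^ finrank F V - q ^ i) := by simp [card_injective_linearMap]

theorem card_disjoint_ker_pairs {W₁ W₂ : Type*} [AddCommGroup W₁] [Module F W₁]
    [FiniteDimensional F W₁] [AddCommGroup W₂] [Module F W₂] [FiniteDimensional F W₂] :
    Nat.card {f : (V →ₗ[F] W₁) × (V →ₗ[F] W₂) // Disjoint (ker f.1) (ker f.2)} =
      ∑ d ∈ range (finrank F V + 1), Nat.card {U : Submodule F V // finrank F U = d} *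
        ((∏ i ∈ range (finrank F V - d), (q ^ finrank F W₁ - q ^ i)) *
          (q ^ ((finrank F V - d) * finrank F W₂) *
            ∏ i ∈ range d, (q ^ finrank F W₂ - q ^ i))) := by
  have := Module.finite_of_finite F (M := V)
  have : Finite (V →ₗ[F] W₁) := Module.finite_of_finite F
  have : Finite (V →ₗ[F] W₂) := Module.finite_of_finite F
  let _ := Fintype.ofFinite (Submodule F V)
  rw [Nat.card_subtype_prod_eq_sum (fun f => ker f) (fun U g => Disjoint U (ker g))]
  simp only [card_linearMap_ker_eq, card_linearMap_disjoint_ker]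
  simpa only [smul_eq_mul] using
    Fintype.sum_comp_eq_sum_range (fun U : Submodule F V => finrank F U)
      (fun U => Nat.lt_succ_of_le U.finrank_le) fun d =>
      (∏ i ∈ range (finrank F V - d), (q ^ finrank F W₁ - q ^ i)) *
        (q ^ ((finrank F V - d) * finrank F W₂) * ∏ i ∈ range d, (q ^ finrank F W₂ - q ^ i))

theorem natCast_card_submodule_finrank_eq_gaussBinom {d : ℕ} (hd : d ≤ finrank F V) :
    (Nat.card {U : Submodule F V // finrank F U = d} : ℝ) =
      gaussBinom q (finrank F V) (finrank F V - d) := by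
  have hq : 2 ≤ q := Fintype.one_lt_card
  have h := congrArg (Nat.cast : ℕ → ℝ) (card_submodule_finrank_eq_mul (F := F) (V := V) d)
  rw [Nat.cast_mul, natCast_prod_pow_sub_pow Fintype.card_pos,
    natCast_prod_pow_sub_pow Fintype.card_pos, ← gaussBinom_mul_prod_pow_sub_pow hq hd] at h
  rw [gaussBinom_symm hq hd]
  refine mul_right_cancel₀ (prod_ne_zero_iff.mpr fun i hi => sub_ne_zero.mpr ?_) h
  exact (pow_lt_pow_right₀ (by exact_mod_cast hq) (mem_range.mp hi)).ne'

end Counting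

section Matrix

variable {F m₁ m₂ n : Type*} [Field F] [Fintype n]

theorem Matrix.rank_fromRows_eq_card_iff (A : Matrix m₁ n F) (B : Matrix m₂ n F) :
    (fromRows A B).rank = Fintype.card n ↔ Disjoint (ker A.mulVecLin) (ker B.mulVecLin) := by
  have hker : ker (fromRows A B).mulVecLin = ker A.mulVecLin ⊓ ker B.mulVecLin := by
    ext v
    simp [fromRows_mulVec, funext_iff]
  have hrank := finrank_range_add_finrank_ker (fromRows A B).mulVecLin
  rw [Module.finrank_fintype_fun_eq_card] at hrank
  rw [Matrix.rank, disjoint_iff, ← hker, ← Submodule.finrank_eq_zero]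
  omega

theorem card_rank_fromRows_eq_card_disjoint_ker [Fintype F] [Fintype m₁] [Fintype m₂]
    [DecidableEq m₁] [DecidableEq m₂] [DecidableEq n] :
    #{X : Matrix m₁ n F × Matrix m₂ n F | (X.1.fromRows X.2).rank = Fintype.card n} =
      Nat.card {f : ((n → F) →ₗ[F] (m₁ → F)) × ((n → F) →ₗ[F] (m₂ → F)) //
        Disjoint (ker f.1) (ker f.2)} := by
  rw [← Fintype.card_subtype, ← Nat.card_eq_fintype_card]
  exact Nat.card_congr ((Matrix.toLin'.toEquiv.prodCongr Matrix.toLin'.toEquiv).subtypeEquiv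
    fun X => Matrix.rank_fromRows_eq_card_iff X.1 X.2)

end Matrix

theorem stacked_rank_prob_general (q : ℕ) (F : Type) [Field F] [Fintype F]
    (hF : Fintype.card F = q) (a b K : ℕ) :
    ((Finset.univ.filter
        (fun X : Matrix (Fin a) (Fin K) F × Matrix (Fin b) (Fin K) F =>
          (Matrix.fromRows X.1 X.2).rank = K)).card : ℝ) /
      (Fintype.card (Matrix (Fin a) (Fin K) F × Matrix (Fin b) (Fin K) F) : ℝ) =
    ∑ i ∈ Finset.Icc (K - b) (min a K), Prk q a K i * Pfr q b (K - i) := by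
  subst hF
  have hq : Fintype.card F ≠ 0 := Fintype.card_ne_zero
  have hcount :=
    card_rank_fromRows_eq_card_disjoint_ker (F := F) (m₁ := Fin a) (m₂ := Fin b) (n := Fin K)
  simp only [Fintype.card_fin, card_disjoint_ker_pairs, Module.finrank_fin_fun] at hcount
  rw [hcount, Fintype.card_prod,
    Module.card_eq_pow_finrank (K := F) (V := Matrix (Fin a) (Fin K) F),
    Module.card_eq_pow_finrank (K := F) (V := Matrix (Fin b) (Fin K) F),
    ← sum_range_Prk_mul_Pfr, Nat.cast_sum, sum_div]
  refine sum_congr rfl fun d hd => ?_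
  obtain ⟨r, rfl⟩ := Nat.exists_eq_add_of_le (Nat.lt_succ_iff.mp (mem_range.mp hd))
  have hG := natCast_card_submodule_finrank_eq_gaussBinom (F := F) (V := Fin (d + r) → F)
    (d := d) (by simp)
  rw [Module.finrank_fin_fun] at hG
  simp only [Nat.cast_mul, Nat.cast_pow, hG, Module.finrank_matrix, Module.finrank_self,
    Fintype.card_fin, Nat.add_sub_cancel_left, natCast_prod_pow_sub_pow Fintype.card_pos,
    prod_pow_sub_pow_eq_mul_Pfr hq, Prk_eq_div hq]
  field_simp
  ring

/-- with `A` a uniformly random `a × K` matrix and `B` an independent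
uniformly random `b × K` matrix over a finite field with `q` elements, and `a + b ≥ K`,
the probability that the vertically stacked matrix `X = [A; B]` has rank `K` equals
`∑_{i = max(0,K-b)}^{min(a,K)} P_i(a,K) · P(b, K-i)`. -/
theorem stacked_rank_prob (q : ℕ) (F : Type) [Field F] [Fintype F] [DecidableEq F]
    (hF : Fintype.card F = q) (a b K : ℕ) (hab : K ≤ a + b) :
    ((Finset.univ.filter
        (fun X : Matrix (Fin a) (Fin K) F × Matrix (Fin b) (Fin K) F =>
          (Matrix.fromRows X.1 X.2).rank = K)).card : ℝ) /
      (Fintype.card (Matrix (Fin a) (Fin K) F × Matrix (Fin b) (Fin K) F) : ℝ) =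
    ∑ i ∈ Finset.Icc (K - b) (min a K), Prk q a K i * Pfr q b (K - i) :=
  stacked_rank_prob_general q F hF a b K
end

section
/- Fix an integer q ≥ 2 and integers m, K ≥ 0. Then ∑_{r=0}^{min(m,K)} P_r(m, K) = 1, where P_r(m, K) = q^{-m(K-r)} · [K; r]_q · ∏_{i=0}^{r-1} (1 - q^{i-m}) and [K; r]_q = ∏_{i=0}^{r-1} (q^{K-i} - 1)/(q^{r-i} - 1); that is, the explicit rank-distribution formula of a uniformly random m×K matrix over a field with q elements sums to one. -/
open Finset

noncomputable def Apoly (q : ℕ) (x : ℝ) (r : ℕ) : ℝ :=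
  ∏ i ∈ Finset.range r, (x - (q : ℝ) ^ i)

lemma den_pos {q : ℕ} (hq : 2 ≤ q) (r : ℕ) :
    0 < ∏ j ∈ Finset.range r, ((q : ℝ) ^ (j + 1) - 1) := by
  apply Finset.prod_pos
  intro j _
  have h2 : (2 : ℝ) ≤ (q : ℝ) := by exact_mod_cast hq
  have : (1 : ℝ) < (q : ℝ) ^ (j + 1) := by
    apply one_lt_pow₀ (by linarith) (by omega)
  linarith

lemma gb_eq (q K r : ℕ) :
    gaussBinom q K r = (∏ i ∈ Finset.range r, ((q : ℝ) ^ (K - i) - 1)) /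
      (∏ j ∈ Finset.range r, ((q : ℝ) ^ (j + 1) - 1)) := by
  rw [gaussBinom, Finset.prod_div_distrib]
  congr 1
  rw [← Finset.prod_range_reflect (fun j => (q : ℝ) ^ (j + 1) - 1) r]
  apply Finset.prod_congr rfl
  intro i hi
  simp only [Finset.mem_range] at hi
  congr 2
  omega

lemma gb_zero (q K : ℕ) : gaussBinom q K 0 = 1 := by simp [gaussBinom]

lemma gb_top (q K : ℕ) : gaussBinom q K (K + 1) = 0 := by
  apply Finset.prod_eq_zero (Finset.self_mem_range_succ K)
  simp

lemma pascal {q : ℕ} (hq : 2 ≤ q) (K s : ℕ) (hs : s ≤ K) :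
    gaussBinom q (K + 1) (s + 1)
      = (q : ℝ) ^ (s + 1) * gaussBinom q K (s + 1) + gaussBinom q K s := by
  rw [gb_eq, gb_eq, gb_eq]
  have hnum1 : ∏ i ∈ Finset.range (s + 1), ((q : ℝ) ^ (K + 1 - i) - 1)
      = ((q : ℝ) ^ (K + 1) - 1) * ∏ i ∈ Finset.range s, ((q : ℝ) ^ (K - i) - 1) := by
    rw [Finset.prod_range_succ']
    simp only [Nat.succ_sub_succ, Nat.sub_zero]
    rw [mul_comm]
  have hnum2 : ∏ i ∈ Finset.range (s + 1), ((q : ℝ) ^ (K - i) - 1)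
      = (∏ i ∈ Finset.range s, ((q : ℝ) ^ (K - i) - 1)) * ((q : ℝ) ^ (K - s) - 1) := by
    rw [Finset.prod_range_succ]
  have hden : ∏ j ∈ Finset.range (s + 1), ((q : ℝ) ^ (j + 1) - 1)
      = (∏ j ∈ Finset.range s, ((q : ℝ) ^ (j + 1) - 1)) * ((q : ℝ) ^ (s + 1) - 1) := by
    rw [Finset.prod_range_succ]
  rw [hnum1, hnum2, hden]
  set N := ∏ i ∈ Finset.range s, ((q : ℝ) ^ (K - i) - 1) with hN
  set D := ∏ j ∈ Finset.range s, ((q : ℝ) ^ (j + 1) - 1) with hD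
  have hDpos : 0 < D := den_pos hq s
  have h2 : (2 : ℝ) ≤ (q : ℝ) := by exact_mod_cast hq
  have hs1 : (1 : ℝ) < (q : ℝ) ^ (s + 1) := one_lt_pow₀ (by linarith) (by omega)
  have hD0 : D ≠ 0 := ne_of_gt hDpos
  have hs0 : (q : ℝ) ^ (s + 1) - 1 ≠ 0 := by linarith
  have hpow : (q : ℝ) ^ (s + 1) * (q : ℝ) ^ (K - s) = (q : ℝ) ^ (K + 1) := by
    rw [← pow_add]; congr 1; omega
  have key : (q : ℝ) ^ (K + 1) - 1
      = (q : ℝ) ^ (s + 1) * ((q : ℝ) ^ (K - s) - 1) + ((q : ℝ) ^ (s + 1) - 1) := by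
    rw [mul_sub, hpow]; ring
  rw [key]
  field_simp

lemma Apoly_succ (q : ℕ) (x : ℝ) (r : ℕ) :
    Apoly q x (r + 1) = Apoly q x r * (x - (q : ℝ) ^ r) := by
  rw [Apoly, Apoly, Finset.prod_range_succ]

lemma key_identity {q : ℕ} (hq : 2 ≤ q) (K : ℕ) (x : ℝ) :
    ∑ r ∈ Finset.range (K + 1), gaussBinom q K r * Apoly q x r = x ^ K := by
  induction K with
  | zero => simp [gaussBinom, Apoly]
  | succ K ih =>
    rw [Finset.sum_range_succ']
    have h1 : ∀ r ∈ Finset.range (K + 1),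
        gaussBinom q (K + 1) (r + 1) * Apoly q x (r + 1)
        = (q : ℝ) ^ (r + 1) * gaussBinom q K (r + 1) * Apoly q x (r + 1)
          + gaussBinom q K r * Apoly q x r * (x - (q : ℝ) ^ r) := by
      intro r hr
      simp only [Finset.mem_range] at hr
      rw [pascal hq K r (by omega), Apoly_succ]
      ring
    rw [Finset.sum_congr rfl h1, Finset.sum_add_distrib]
    have h2 : ∑ r ∈ Finset.range (K + 1),
        (q : ℝ) ^ (r + 1) * gaussBinom q K (r + 1) * Apoly q x (r + 1)
        = (∑ r ∈ Finset.range (K + 1), (q : ℝ) ^ r * gaussBinom q K r * Apoly q x r) - 1 := by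
      simp only [Apoly]
      have := Finset.sum_range_succ' (fun r => (q : ℝ) ^ r * gaussBinom q K r * Apoly q x r) (K + 1)
      rw [Finset.sum_range_succ (fun r => (q : ℝ) ^ r * gaussBinom q K r * Apoly q x r) (K + 1)] at this
      rw [gb_top] at this
      simp only [gb_zero, Apoly, Finset.range_zero, Finset.prod_empty, pow_zero,
        mul_zero, zero_mul, add_zero, mul_one, one_mul] at this
      linarith [this]
    rw [h2]
    have h3 : ∑ r ∈ Finset.range (K + 1), gaussBinom q K r * Apoly q x r * (x - (q : ℝ) ^ r)
        = x * (∑ r ∈ Finset.range (K + 1), gaussBinom q K r * Apoly q x r)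
          - ∑ r ∈ Finset.range (K + 1), (q : ℝ) ^ r * gaussBinom q K r * Apoly q x r := by
      rw [Finset.mul_sum, ← Finset.sum_sub_distrib]
      apply Finset.sum_congr rfl
      intro r _
      ring
    rw [h3, ih]
    simp [gb_zero, Apoly]
    ring

lemma Prk_eq {q : ℕ} (hq : 2 ≤ q) (m K r : ℕ) :
    Prk q m K r = (q : ℝ) ^ (-((m : ℤ) * (K : ℤ))) *
      (gaussBinom q K r * Apoly q ((q : ℝ) ^ m) r) := by
  have hq0 : (q : ℝ) ≠ 0 := by positivity
  rw [Prk, Apoly]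
  have hprod : ∏ i ∈ Finset.range r, (1 - (q : ℝ) ^ ((i : ℤ) - (m : ℤ)))
      = ((q : ℝ) ^ (-(m : ℤ))) ^ r * ∏ i ∈ Finset.range r, ((q : ℝ) ^ m - (q : ℝ) ^ i) := by
    calc ∏ i ∈ Finset.range r, (1 - (q : ℝ) ^ ((i : ℤ) - (m : ℤ)))
        = ∏ i ∈ Finset.range r, ((q : ℝ) ^ (-(m : ℤ)) * ((q : ℝ) ^ m - (q : ℝ) ^ i)) := by
          apply Finset.prod_congr rfl
          intro i _
          rw [mul_sub]
          rw [show ((q:ℝ)^(-(m:ℤ)) * (q:ℝ)^m : ℝ) = 1 by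
            rw [← zpow_natCast (q:ℝ) m, ← zpow_add₀ hq0]; simp]
          congr 1
          rw [← zpow_natCast (q:ℝ) i, ← zpow_add₀ hq0]
          congr 1
          ring
      _ = (∏ _i ∈ Finset.range r, (q : ℝ) ^ (-(m : ℤ))) *
            ∏ i ∈ Finset.range r, ((q : ℝ) ^ m - (q : ℝ) ^ i) := Finset.prod_mul_distrib
      _ = _ := by rw [Finset.prod_const, Finset.card_range]
  rw [hprod]
  have hpow : (q : ℝ) ^ (-(m : ℤ) * ((K : ℤ) - (r : ℤ))) * ((q : ℝ) ^ (-(m : ℤ))) ^ r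
      = (q : ℝ) ^ (-((m : ℤ) * (K : ℤ))) := by
    rw [← zpow_natCast ((q:ℝ) ^ (-(m:ℤ))) r, ← zpow_mul, ← zpow_add₀ hq0]
    congr 1
    ring
  calc (q : ℝ) ^ (-(m : ℤ) * ((K : ℤ) - (r : ℤ))) * gaussBinom q K r *
        (((q : ℝ) ^ (-(m : ℤ))) ^ r * ∏ i ∈ Finset.range r, ((q : ℝ) ^ m - (q : ℝ) ^ i))
      = ((q : ℝ) ^ (-(m : ℤ) * ((K : ℤ) - (r : ℤ))) * ((q : ℝ) ^ (-(m : ℤ))) ^ r) *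
        (gaussBinom q K r * ∏ i ∈ Finset.range r, ((q : ℝ) ^ m - (q : ℝ) ^ i)) := by ring
    _ = _ := by rw [hpow]

/-- for an integer `q ≥ 2` and integers `m, K ≥ 0`,
`∑_{r=0}^{min(m,K)} P_r(m,K) = 1`. -/
theorem rank_distribution_sums_to_one (q m K : ℕ) (hq : 2 ≤ q) :
    ∑ r ∈ Finset.range (min m K + 1), Prk q m K r = 1 := by
  have hq0 : (q : ℝ) ≠ 0 := by positivity
  have hsub : Finset.range (min m K + 1) ⊆ Finset.range (K + 1) :=
    Finset.range_subset_range.2 (by omega)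
  have hzero : ∀ r ∈ Finset.range (K + 1), r ∉ Finset.range (min m K + 1) →
      Prk q m K r = 0 := by
    intro r hr hr'
    simp only [Finset.mem_range] at hr hr'
    have hm : m < r := by omega
    rw [Prk]
    have : ∏ i ∈ Finset.range r, (1 - (q : ℝ) ^ ((i : ℤ) - (m : ℤ))) = 0 := by
      apply Finset.prod_eq_zero (Finset.mem_range.2 hm)
      simp
    rw [this, mul_zero]
  rw [Finset.sum_subset hsub hzero]
  have : ∀ r ∈ Finset.range (K + 1), Prk q m K r
      = (q : ℝ) ^ (-((m : ℤ) * (K : ℤ))) * (gaussBinom q K r * Apoly q ((q : ℝ) ^ m) r) :=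
    fun r _ => Prk_eq hq m K r
  rw [Finset.sum_congr rfl this, ← Finset.mul_sum, key_identity hq K ((q : ℝ) ^ m),
    ← pow_mul]
  rw [← zpow_natCast (q : ℝ) (m * K), ← zpow_add₀ hq0]
  simp
end

section
/- Consider the Code-and-Forward (CF) variant of the RF relay model in which the source transmits its K packets uncoded, i.e. N_S = K and the source coefficient matrix C is the K×K identity matrix over F_q (all other randomness as in the RF model). Then the probability of successful decoding is at most (1 − ε̃)^K, where ε̃ = ε_SD · ∏_{j=1}^{L} ε_SRj. -/
open Finset

section Aux

lemma sum_pi_eval {ι β : Type*} [Fintype ι] [DecidableEq ι] [Fintype β] (F : ι → β → ℝ) :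
    ∑ f : ι → β, ∏ i, F i (f i) = ∏ i, ∑ v : β, F i v := by
  rw [Finset.prod_univ_sum, Fintype.piFinset_univ]

lemma sum_pi_bool {ι : Type*} [Fintype ι] [DecidableEq ι] (x y : ι → ℝ) :
    ∑ f : ι → Bool, ∏ i, (if f i then x i else y i) = ∏ i, (x i + y i) := by
  have h := sum_pi_eval (fun i (b : Bool) => if b then x i else y i)
  beta_reduce at h
  rw [h]
  exact Finset.prod_congr rfl fun i _ => by simp [add_comm]

lemma ite_all_prod {ι : Type*} [Fintype ι] (P : ι → Prop) [DecidablePred P] (x : ι → ℝ) :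
    (if (∀ i, P i) then ∏ i, x i else 0) = ∏ i, (if P i then x i else 0) := by
  by_cases h : ∀ i, P i
  · simp only [if_pos h]
    exact Finset.prod_congr rfl fun i _ => (if_pos (h i)).symm
  · rw [if_neg h]
    push_neg at h
    obtain ⟨i, hi⟩ := h
    refine (Finset.prod_eq_zero (Finset.mem_univ i) ?_).symm
    exact if_neg hi

lemma rank_ne_of_zero_col {F : Type} [Field F] {m : Type*} {K : ℕ}
    (M : Matrix m (Fin K) F) (i0 : Fin K) (h : ∀ r, M r i0 = 0) : M.rank ≠ K := by
  intro hrank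
  have hmem : Pi.single i0 (1 : F) ∈ LinearMap.ker M.mulVecLin := by
    rw [LinearMap.mem_ker]
    show M.mulVec (Pi.single i0 1) = 0
    rw [Matrix.mulVec_single]
    ext r
    simp [h r]
  have hne : (Pi.single i0 (1 : F) : Fin K → F) ≠ 0 := by
    intro hc
    have := congrFun hc i0
    simp at this
  have hadd := LinearMap.finrank_range_add_finrank_ker M.mulVecLin
  rw [Module.finrank_fin_fun] at hadd
  have hr : Module.finrank F (LinearMap.range M.mulVecLin) = K := hrank
  rw [hr] at hadd
  have hker0 : Module.finrank F (LinearMap.ker M.mulVecLin) = 0 := by omega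
  have : LinearMap.ker M.mulVecLin = ⊥ := Submodule.finrank_eq_zero.mp hker0
  rw [this, Submodule.mem_bot] at hmem
  exact hne hmem

/-- the per-packet coverage sum -/
lemma point_sum (L : ℕ) (εSD : ℝ) (εSR : Fin L → ℝ) :
    ∑ p : Bool × (Fin L → Bool),
      (if (p.1 = true ∨ ∃ j, p.2 j = true) then
        ((if p.1 then 1 - εSD else εSD) * ∏ j, (if p.2 j then 1 - εSR j else εSR j))
      else 0)
    = 1 - εSD * ∏ j, εSR j := by
  classical
  set p0 : Bool × (Fin L → Bool) := (false, fun _ => false) with hp0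
  have hcond : ∀ p : Bool × (Fin L → Bool), (p.1 = true ∨ ∃ j, p.2 j = true) ↔ p ≠ p0 := by
    intro p
    constructor
    · rintro (h | ⟨j, h⟩) hp <;> rw [hp] at h <;> simp [hp0] at h
    · intro hp
      by_contra hc
      push_neg at hc
      obtain ⟨h1, h2⟩ := hc
      apply hp
      have e1 : p.1 = false := by simpa using h1
      have e2 : p.2 = fun _ => false := funext fun j => by simpa using h2 j
      rw [hp0]
      exact Prod.ext e1 e2
  have hstep : ∀ p : Bool × (Fin L → Bool),
      (if (p.1 = true ∨ ∃ j, p.2 j = true) then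
        ((if p.1 then 1 - εSD else εSD) * ∏ j, (if p.2 j then 1 - εSR j else εSR j))
      else 0)
      = ((if p.1 then 1 - εSD else εSD) * ∏ j, (if p.2 j then 1 - εSR j else εSR j))
        - (if p = p0 then ((if p.1 then 1 - εSD else εSD) *
            ∏ j, (if p.2 j then 1 - εSR j else εSR j)) else 0) := by
    intro p
    by_cases h : p = p0
    · rw [if_neg (fun hc => ((hcond p).mp hc) h), if_pos h]
      ring
    · rw [if_pos ((hcond p).mpr h), if_neg h]
      ring
  simp only [hstep]
  rw [Finset.sum_sub_distrib]
  have htot : ∑ p : Bool × (Fin L → Bool),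
      ((if p.1 then 1 - εSD else εSD) * ∏ j, (if p.2 j then 1 - εSR j else εSR j)) = 1 := by
    rw [Fintype.sum_prod_type]
    have hin : ∀ c : Bool, (∑ v : Fin L → Bool, (if c then 1 - εSD else εSD) *
        ∏ j, (if v j then 1 - εSR j else εSR j)) = (if c then 1 - εSD else εSD) := by
      intro c
      rw [← Finset.mul_sum, sum_pi_bool]
      simp
    simp only [hin]
    simp
  have hsingle : ∑ p : Bool × (Fin L → Bool),
      (if p = p0 then ((if p.1 then 1 - εSD else εSD) *
        ∏ j, (if p.2 j then 1 - εSR j else εSR j)) else 0)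
      = εSD * ∏ j, εSR j := by
    rw [Finset.sum_ite_eq' Finset.univ p0]
    simp [hp0]
  rw [htot, hsingle]

end Aux

/-- the full coverage-event sum equals the bound -/
lemma cov_sum (K NR L : ℕ) (M : Type) [Fintype M] [Nonempty M]
    (εSD : ℝ) (εSR εRD : Fin L → ℝ) :
    ∑ ω ∈ Finset.univ.filter
        (fun ω : (Fin K → Bool) × (Fin L → Fin K → Bool) × (Fin L → M) × (Fin L → Fin NR → Bool) =>
          ∀ i, ω.1 i = true ∨ ∃ j, ω.2.1 j i = true),
      (∏ _j : Fin L, ((Fintype.card M : ℝ))⁻¹) *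
      (∏ i : Fin K, (if ω.1 i then (1 - εSD) else εSD)) *
      (∏ j : Fin L, ∏ i : Fin K, (if ω.2.1 j i then (1 - εSR j) else εSR j)) *
      (∏ j : Fin L, ∏ t : Fin NR, (if ω.2.2.2 j t then (1 - εRD j) else εRD j)) =
    (1 - εSD * ∏ j, εSR j) ^ K := by
  classical
  rw [Finset.sum_filter]
  simp only [Fintype.sum_prod_type]
  -- abbreviations
  set C : ℝ := ∏ _j : Fin L, ((Fintype.card M : ℝ))⁻¹ with hC
  have hMcard : (Fintype.card M : ℝ) ≠ 0 := by
    exact_mod_cast Fintype.card_ne_zero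
  have hG : ∑ _G : Fin L → M, C = 1 := by
    rw [Finset.sum_const, hC, Finset.prod_const, Finset.card_univ, Finset.card_univ,
      nsmul_eq_mul, Fintype.card_fun, Fintype.card_fin]
    push_cast
    rw [← mul_pow, mul_inv_cancel₀ hMcard, one_pow]
  have hd : ∑ d : Fin L → Fin NR → Bool,
      (∏ j : Fin L, ∏ t : Fin NR, (if d j t then (1 - εRD j) else εRD j)) = 1 := by
    have h := sum_pi_eval (fun j (v : Fin NR → Bool) => ∏ t, if v t then 1 - εRD j else εRD j)
    beta_reduce at h
    rw [h]
    refine Finset.prod_eq_one fun j _ => ?_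
    rw [sum_pi_bool]
    simp
  have inner : ∀ (b : Fin K → Bool) (a : Fin L → Fin K → Bool),
      (∑ G : Fin L → M, ∑ d : Fin L → Fin NR → Bool,
        (if (∀ i, b i = true ∨ ∃ j, a j i = true) then
          C * (∏ i : Fin K, (if b i then (1 - εSD) else εSD)) *
          (∏ j : Fin L, ∏ i : Fin K, (if a j i then (1 - εSR j) else εSR j)) *
          (∏ j : Fin L, ∏ t : Fin NR, (if d j t then (1 - εRD j) else εRD j))
        else 0))
      = (if (∀ i, b i = true ∨ ∃ j, a j i = true) then
          (∏ i : Fin K, (if b i then (1 - εSD) else εSD)) *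
          (∏ j : Fin L, ∏ i : Fin K, (if a j i then (1 - εSR j) else εSR j))
        else 0) := by
    intro b a
    by_cases h : ∀ i, b i = true ∨ ∃ j, a j i = true
    · simp only [if_pos h]
      rw [Finset.sum_congr rfl (fun (G : Fin L → M) _ => by
        rw [← Finset.mul_sum, hd, mul_one])]
      rw [show (∑ _G : Fin L → M,
          C * (∏ i : Fin K, (if b i then (1 - εSD) else εSD)) *
          (∏ j : Fin L, ∏ i : Fin K, (if a j i then (1 - εSR j) else εSR j)))
        = (∑ _G : Fin L → M, C) *
          ((∏ i : Fin K, (if b i then (1 - εSD) else εSD)) *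
          (∏ j : Fin L, ∏ i : Fin K, (if a j i then (1 - εSR j) else εSR j))) from by
        rw [Finset.sum_mul]
        exact Finset.sum_congr rfl fun _ _ => by ring]
      rw [hG, one_mul]
    · simp only [if_neg h, Finset.sum_const_zero]
  simp only [inner]
  -- now reindex the pair (b, a) as a function Fin K → Bool × (Fin L → Bool)
  have hfg : ∀ (b : Fin K → Bool) (a : Fin L → Fin K → Bool),
      (if (∀ i, b i = true ∨ ∃ j, a j i = true) then
          (∏ i : Fin K, (if b i then (1 - εSD) else εSD)) *
          (∏ j : Fin L, ∏ i : Fin K, (if a j i then (1 - εSR j) else εSR j))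
        else 0)
      = ∏ i : Fin K, (if (b i = true ∨ ∃ j, a j i = true) then
          ((if b i then 1 - εSD else εSD) * ∏ j, (if a j i then 1 - εSR j else εSR j))
        else 0) := by
    intro b a
    rw [← ite_all_prod]
    congr 1
    rw [Finset.prod_comm, ← Finset.prod_mul_distrib]
  simp only [hfg]
  -- equivalence
  let e : ((Fin K → Bool) × (Fin L → Fin K → Bool)) ≃ (Fin K → Bool × (Fin L → Bool)) :=
    { toFun := fun p i => (p.1 i, fun j => p.2 j i)
      invFun := fun u => (fun i => (u i).1, fun j i => (u i).2 j)
      left_inv := fun p => rfl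
      right_inv := fun u => rfl }
  have hsum : (∑ b : Fin K → Bool, ∑ a : Fin L → Fin K → Bool,
      ∏ i : Fin K, (if (b i = true ∨ ∃ j, a j i = true) then
          ((if b i then 1 - εSD else εSD) * ∏ j, (if a j i then 1 - εSR j else εSR j))
        else 0))
      = ∑ u : Fin K → Bool × (Fin L → Bool),
          ∏ i : Fin K, (if ((u i).1 = true ∨ ∃ j, (u i).2 j = true) then
            ((if (u i).1 then 1 - εSD else εSD) * ∏ j, (if (u i).2 j then 1 - εSR j else εSR j))
          else 0) := by
    rw [← Fintype.sum_prod_type']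
    exact Fintype.sum_equiv e _ _ (fun p => rfl)
  rw [hsum]
  have h := sum_pi_eval (fun (i : Fin K) (p : Bool × (Fin L → Bool)) =>
    (if (p.1 = true ∨ ∃ j, p.2 j = true) then
      ((if p.1 then 1 - εSD else εSD) * ∏ j, (if p.2 j then 1 - εSR j else εSR j))
    else 0))
  beta_reduce at h
  rw [h]
  rw [Finset.prod_congr rfl (fun i _ => point_sum L εSD εSR)]
  simp

/-- Code-and-Forward: the source transmits its `K` packets uncoded,
i.e. `N_S = K` and the source coefficient matrix is the `K × K` identity matrix over
a finite field `F`. Sample space: `b` the destination reception pattern from the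
source (row `i` received w.p. `1-ε_SD`); `a j` the reception pattern of relay `j`
(w.p. `1-ε_SR j`); `G j` the recoding matrix of relay `j` (realised as a uniformly
random `N_R × K` matrix of which only the columns of the packets received by relay
`j` are used); `d j` the destination reception pattern from relay `j`
(w.p. `1-ε_RD j`). The destination matrix `C_D` stacks the received identity rows and
the matrices `(G j)_{D j} · C_{A j}`; decoding succeeds iff `rank C_D = K`. The
probability of successful decoding is at most `(1 - ε̃)^K`, where
`ε̃ = ε_SD · ∏_j ε_SR j`. -/
theorem cf_decoding_bound (F : Type) [Field F] [Fintype F] [DecidableEq F]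
    (K NR L : ℕ) (hK : 1 ≤ K) (hL : 1 ≤ L)
    (εSD : ℝ) (εSR εRD : Fin L → ℝ) (hSD : εSD ∈ Set.Icc (0:ℝ) 1)
    (hSR : ∀ j, εSR j ∈ Set.Icc (0:ℝ) 1) (hRD : ∀ j, εRD j ∈ Set.Icc (0:ℝ) 1) :
    ∑ ω ∈ Finset.univ.filter
        (fun ω : (Fin K → Bool) × (Fin L → Fin K → Bool) ×
            (Fin L → Matrix (Fin NR) (Fin K) F) × (Fin L → Fin NR → Bool) =>
          ((Matrix.of (Sum.elim
              (fun (i : {i : Fin K // ω.1 i = true}) (k : Fin K) =>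
                (1 : Matrix (Fin K) (Fin K) F) i.1 k)
              (fun (p : Σ j : Fin L, {t : Fin NR // ω.2.2.2 j t = true}) (k : Fin K) =>
                ∑ i : {i : Fin K // ω.2.1 p.1 i = true},
                  ω.2.2.1 p.1 p.2.1 i.1 * (1 : Matrix (Fin K) (Fin K) F) i.1 k))).rank
            = K)),
      (∏ _j : Fin L, ((Fintype.card (Matrix (Fin NR) (Fin K) F) : ℝ))⁻¹) *
      (∏ i : Fin K, (if ω.1 i then (1 - εSD) else εSD)) *
      (∏ j : Fin L, ∏ i : Fin K, (if ω.2.1 j i then (1 - εSR j) else εSR j)) *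
      (∏ j : Fin L, ∏ t : Fin NR, (if ω.2.2.2 j t then (1 - εRD j) else εRD j)) ≤
    (1 - εSD * ∏ j, εSR j) ^ K := by
  have h01 : ∀ (c : Bool) (x : ℝ), 0 ≤ x → x ≤ 1 → (0:ℝ) ≤ if c then 1 - x else x := by
    intro c x h0 h1
    cases c <;> simp <;> linarith
  have hsub : (Finset.univ.filter
        (fun ω : (Fin K → Bool) × (Fin L → Fin K → Bool) ×
            (Fin L → Matrix (Fin NR) (Fin K) F) × (Fin L → Fin NR → Bool) =>
          ((Matrix.of (Sum.elim
              (fun (i : {i : Fin K // ω.1 i = true}) (k : Fin K) =>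
                (1 : Matrix (Fin K) (Fin K) F) i.1 k)
              (fun (p : Σ j : Fin L, {t : Fin NR // ω.2.2.2 j t = true}) (k : Fin K) =>
                ∑ i : {i : Fin K // ω.2.1 p.1 i = true},
                  ω.2.2.1 p.1 p.2.1 i.1 * (1 : Matrix (Fin K) (Fin K) F) i.1 k))).rank
            = K)))
      ⊆ (Finset.univ.filter
        (fun ω : (Fin K → Bool) × (Fin L → Fin K → Bool) ×
            (Fin L → Matrix (Fin NR) (Fin K) F) × (Fin L → Fin NR → Bool) =>
          ∀ i, ω.1 i = true ∨ ∃ j, ω.2.1 j i = true)) := by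
    intro ω hω
    rw [Finset.mem_filter] at hω ⊢
    refine ⟨Finset.mem_univ _, ?_⟩
    by_contra hcov
    push_neg at hcov
    obtain ⟨i0, hb, ha⟩ := hcov
    refine rank_ne_of_zero_col _ i0 ?_ hω.2
    rintro (i | p)
    · simp only [Matrix.of_apply, Sum.elim_inl]
      exact Matrix.one_apply_ne fun hii => hb (hii ▸ i.2)
    · simp only [Matrix.of_apply, Sum.elim_inr]
      refine Finset.sum_eq_zero fun i _ => ?_
      have hne : (↑i : Fin K) ≠ i0 := fun hii => ha p.1 (by rw [← hii]; exact i.2)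
      rw [Matrix.one_apply_ne hne, mul_zero]
  refine le_of_le_of_eq
    (Finset.sum_le_sum_of_subset_of_nonneg hsub fun ω _ _ => ?_)
    (cov_sum K NR L (Matrix (Fin NR) (Fin K) F) εSD εSR εRD)
  refine mul_nonneg (mul_nonneg (mul_nonneg ?_ ?_) ?_) ?_
  · exact Finset.prod_nonneg fun j _ => inv_nonneg.mpr (Nat.cast_nonneg _)
  · exact Finset.prod_nonneg fun i _ => h01 _ _ hSD.1 hSD.2
  · exact Finset.prod_nonneg fun j _ => Finset.prod_nonneg fun i _ => h01 _ _ (hSR j).1 (hSR j).2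
  · exact Finset.prod_nonneg fun j _ => Finset.prod_nonneg fun t _ => h01 _ _ (hRD j).1 (hRD j).2
end
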